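/- For every killing rate κ with 0 < κ < 1, the Green's function at the origin satisfies G^{o,o} ≤ (log κ^{−1})/π + 2. -/

import Mathlib

/-!
In the coordinates `(a + b, a - b)` a nearest-neighbour step of `ℤ²` is a pair of `±1` steps,
so a closed walk of length `n` is determined by the two sets of times at which these coordinates
increase, each of size `n / 2`. Hence there are no closed walks of odd length and
`W_{2m}^{o,o} ≤ C(2m, m)²`, which Wallis' product bounds by `16^m / (π m)`. With
`y = 16 / (4 + κ)²` this gives
`G^{o,o} ≤ 1 + (1/π) ∑_{m ≥ 1} y^m / m = 1 - log (1 - y) / π`,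
and `1 - y = κ (8 + κ) / (4 + κ)²` with `log ((4 + κ)² / (8 + κ)) ≤ 3 < π`.
-/

open scoped Real

/-- Graph (L¹) distance of `x ∈ ℤ²` from the origin: `|x₁| + |x₂|`. -/
def gnorm (x : ℤ × ℤ) : ℕ := x.1.natAbs + x.2.natAbs

/-- `W n x` is the number of nearest-neighbour walks of length `n` in `ℤ²`
from the origin `o = (0,0)` to `x`, i.e. the number of sequences
`(v₀, …, v_n)` with `v₀ = o`, `v_n = x` and `|v_{i+1} − v_i| = 1` for all `i`. -/
noncomputable def W (n : ℕ) (x : ℤ × ℤ) : ℕ :=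
  Set.ncard {v : Fin (n + 1) → ℤ × ℤ |
    v 0 = (0, 0) ∧ v (Fin.last n) = x ∧
    ∀ i : Fin n, gnorm (v i.succ - v i.castSucc) = 1}

/-- The Green's function `G^{o,x}` of the simple random walk on `ℤ²` with
killing rate `κ`: `G κ x = Σ_{n≥0} (4+κ)^{-n} W_n^{o,x}`. -/
noncomputable def G (κ : ℝ) (x : ℤ × ℤ) : ℝ :=
  ∑' n : ℕ, (1 / (4 + κ)) ^ n * (W n x : ℝ)

open Finset

section Telescoping

variable {M : Type*} [AddCommGroup M]

theorem Fin.sum_succ_sub_castSucc : ∀ {n : ℕ} (v : Fin (n + 1) → M),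
    ∑ i : Fin n, (v i.succ - v i.castSucc) = v (Fin.last n) - v 0
  | 0, v => by simp
  | n + 1, v => by
    rw [Fin.sum_univ_castSucc]
    simpa [← Fin.succ_castSucc] using
      congrArg (· + (v (Fin.last (n + 1)) - v (Fin.last n).castSucc))
        (Fin.sum_succ_sub_castSucc (v ∘ Fin.castSucc))

theorem Fin.eq_of_succ_sub_castSucc_eq {n : ℕ} {v w : Fin (n + 1) → M} (h₀ : v 0 = w 0)
    (h : ∀ i : Fin n, v i.succ - v i.castSucc = w i.succ - w i.castSucc) : v = w := by
  funext j
  induction j using Fin.induction with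
  | zero => exact h₀
  | succ i ih => rw [← sub_add_cancel (v i.succ), h i, ih, sub_add_cancel]

end Telescoping

theorem two_mul_card_filter_eq_one {ι : Type*} [Fintype ι] {c : ι → ℤ}
    (hc : ∀ i, c i = 1 ∨ c i = -1) (hsum : ∑ i, c i = 0) :
    2 * #{i | c i = 1} = Fintype.card ι := by
  have hc' : ∑ i, c i = ∑ i, (2 * (if c i = 1 then 1 else 0) - 1) :=
    sum_congr rfl fun i _ => by rcases hc i with h | h <;> simp [h]
  rw [hc', sum_sub_distrib, ← mul_sum, sum_boole, sum_const, card_univ, nsmul_one] at hsum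
  omega

theorem gnorm_eq_one_iff {s : ℤ × ℤ} :
    gnorm s = 1 ↔ (s.1 + s.2 = 1 ∨ s.1 + s.2 = -1) ∧ (s.1 - s.2 = 1 ∨ s.1 - s.2 = -1) := by
  unfold gnorm
  omega

theorem eq_of_gnorm_eq_one {s t : ℤ × ℤ} (hs : gnorm s = 1) (ht : gnorm t = 1)
    (h₁ : s.1 + s.2 = 1 ↔ t.1 + t.2 = 1) (h₂ : s.1 - s.2 = 1 ↔ t.1 - t.2 = 1) : s = t := by
  unfold gnorm at hs ht
  ext <;> omega

def closedWalks (n : ℕ) : Set (Fin (n + 1) → ℤ × ℤ) :=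
  {v | v 0 = (0, 0) ∧ v (Fin.last n) = (0, 0) ∧
    ∀ i : Fin n, gnorm (v i.succ - v i.castSucc) = 1}

theorem W_origin_eq_ncard_closedWalks (n : ℕ) : W n (0, 0) = (closedWalks n).ncard := rfl

def walkCode {n : ℕ} (v : Fin (n + 1) → ℤ × ℤ) : Finset (Fin n) × Finset (Fin n) :=
  (({i | (v i.succ - v i.castSucc).1 + (v i.succ - v i.castSucc).2 = 1} : Finset (Fin n)),
   ({i | (v i.succ - v i.castSucc).1 - (v i.succ - v i.castSucc).2 = 1} : Finset (Fin n)))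

theorem two_mul_card_walkCode {n : ℕ} {v : Fin (n + 1) → ℤ × ℤ}
    (hv : v ∈ closedWalks n) :
    2 * #(walkCode v).1 = n ∧ 2 * #(walkCode v).2 = n := by
  obtain ⟨h₀, hlast, hstep⟩ := hv
  have hsum : ∑ i : Fin n, (v i.succ - v i.castSucc) = 0 := by
    rw [Fin.sum_succ_sub_castSucc, hlast, h₀, sub_self]
  have hsum₁ := congrArg Prod.fst hsum
  have hsum₂ := congrArg Prod.snd hsum
  rw [Prod.fst_sum] at hsum₁
  rw [Prod.snd_sum] at hsum₂
  have hunit := fun i => gnorm_eq_one_iff.1 (hstep i)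
  have h₁ := two_mul_card_filter_eq_one (fun i => (hunit i).1)
    (by rw [sum_add_distrib, hsum₁, hsum₂]; rfl)
  have h₂ := two_mul_card_filter_eq_one (fun i => (hunit i).2)
    (by rw [sum_sub_distrib, hsum₁, hsum₂]; rfl)
  rw [Fintype.card_fin] at h₁ h₂
  exact ⟨h₁, h₂⟩

theorem injOn_walkCode (n : ℕ) : Set.InjOn walkCode (closedWalks n) := by
  intro v hv w hw hvw
  refine Fin.eq_of_succ_sub_castSucc_eq (hv.1.trans hw.1.symm) fun i => ?_
  simp only [walkCode, Prod.ext_iff, Finset.ext_iff, mem_filter, mem_univ, true_and] at hvw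
  exact eq_of_gnorm_eq_one (hv.2.2 i) (hw.2.2 i) (hvw.1 i) (hvw.2 i)

theorem W_two_mul_origin_le (m : ℕ) : W (2 * m) (0, 0) ≤ m.centralBinom ^ 2 := by
  let codes : Finset (Finset (Fin (2 * m)) × Finset (Fin (2 * m))) :=
    powersetCard m univ ×ˢ powersetCard m univ
  have hmaps : ∀ v ∈ closedWalks (2 * m), walkCode v ∈ (codes : Set _) := by
    intro v hv
    have := two_mul_card_walkCode hv
    simp only [codes, coe_product, Set.mem_prod, mem_coe, mem_powersetCard, subset_univ, true_and]
    omega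
  rw [W_origin_eq_ncard_closedWalks]
  refine (Set.ncard_le_ncard_of_injOn _ hmaps (injOn_walkCode _) (finite_toSet _)).trans ?_
  rw [Set.ncard_coe_finset, card_product, card_powersetCard, card_univ, Fintype.card_fin,
    Nat.centralBinom_eq_two_mul_choose, sq]

theorem W_two_mul_add_one_origin (m : ℕ) : W (2 * m + 1) (0, 0) = 0 := by
  have hempty : closedWalks (2 * m + 1) = ∅ := Set.eq_empty_of_forall_notMem fun v hv => by
    have := (two_mul_card_walkCode hv).1
    omega
  rw [W_origin_eq_ncard_closedWalks, hempty, Set.ncard_empty]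

theorem centralBinom_sq_mul_wallis (m : ℕ) :
    (2 * m + 1) * (m.centralBinom ^ 2 / 16 ^ m) * Real.Wallis.W m = 1 := by
  have hfact : (m.centralBinom : ℝ) * m.factorial * m.factorial = (2 * m).factorial := by
    have := Nat.choose_mul_factorial_mul_factorial (show m ≤ 2 * m by omega)
    rw [show 2 * m - m = m by omega, ← Nat.centralBinom_eq_two_mul_choose] at this
    exact_mod_cast this
  have hcb : (m.centralBinom : ℝ) ≠ 0 := Nat.cast_ne_zero.2 m.centralBinom_ne_zero
  rw [Real.Wallis.W_eq_factorial_ratio, ← hfact, pow_mul]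
  field_simp
  norm_num

theorem centralBinom_sq_le {m : ℕ} (hm : m ≠ 0) :
    (m.centralBinom : ℝ) ^ 2 ≤ 16 ^ m / (π * m) := by
  have hW := Real.Wallis.le_W m
  -- `le_W` together with `4 m (m + 1) ≤ (2 m + 1)²`
  have hWm : π * m ≤ (2 * m + 1) * Real.Wallis.W m := by
    rw [div_mul_eq_mul_div, div_le_iff₀ (by positivity)] at hW
    nlinarith [Real.pi_pos]
  have hsq : (m.centralBinom ^ 2 / 16 ^ m : ℝ) * (π * m) ≤ 1 := calc
    _ ≤ m.centralBinom ^ 2 / 16 ^ m * ((2 * m + 1) * Real.Wallis.W m) :=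
      mul_le_mul_of_nonneg_left hWm (by positivity)
    _ = 1 := by linear_combination centralBinom_sq_mul_wallis m
  rw [le_div_iff₀ (by positivity)]
  rwa [div_mul_eq_mul_div, div_le_one (by positivity)] at hsq

theorem W_two_mul_origin_le_div {m : ℕ} (hm : m ≠ 0) :
    (W (2 * m) (0, 0) : ℝ) ≤ 16 ^ m / (π * m) :=
  le_trans (by exact_mod_cast W_two_mul_origin_le m) (centralBinom_sq_le hm)

theorem G_origin_le {κ : ℝ} (hκ : 0 < κ) :
    G κ (0, 0) ≤ 1 + -Real.log (1 - 16 / (4 + κ) ^ 2) / π := by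
  set y : ℝ := 16 / (4 + κ) ^ 2 with hy
  set a : ℕ → ℝ := fun m => (1 / (4 + κ)) ^ (2 * m) * W (2 * m) (0, 0) with ha
  have hG : G κ (0, 0) = ∑' m, a m := by
    refine ((mul_right_injective₀ two_ne_zero).tsum_eq fun n hn => ?_).symm
    obtain ⟨m, rfl | rfl⟩ := Nat.even_or_odd' n
    · exact ⟨m, rfl⟩
    · simp [W_two_mul_add_one_origin] at hn
  have hy₁ : |y| < 1 := by
    rw [abs_of_pos (by positivity), div_lt_one (by positivity)]
    nlinarith
  have hlog := (Real.hasSum_pow_div_log_of_abs_lt_one hy₁).div_const π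
  have hle : ∀ m, a (m + 1) ≤ y ^ (m + 1) / (m + 1) / π := fun m => calc
    a (m + 1) ≤ (1 / (4 + κ)) ^ (2 * (m + 1)) * (16 ^ (m + 1) / (π * (m + 1))) := by
      refine mul_le_mul_of_nonneg_left ?_ (by positivity)
      exact_mod_cast W_two_mul_origin_le_div m.succ_ne_zero
    _ = y ^ (m + 1) / (m + 1) / π := by
      rw [pow_mul, ← mul_div_assoc, ← mul_pow, hy]
      field_simp
  have hsumm : Summable fun m => a (m + 1) :=
    .of_nonneg_of_le (fun m => by positivity) hle hlog.summable
  rw [hG, ((summable_nat_add_iff 1).1 hsumm).tsum_eq_zero_add]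
  gcongr
  · simpa [ha] using W_two_mul_origin_le 0
  · exact hasSum_le hle hsumm.hasSum hlog

theorem neg_log_one_sub_le {κ : ℝ} (hκ : 0 < κ) (hκ' : κ < 1) :
    -Real.log (1 - 16 / (4 + κ) ^ 2) ≤ Real.log κ⁻¹ + π := by
  have hfactor : (1 - 16 / (4 + κ) ^ 2)⁻¹ = κ⁻¹ * ((4 + κ) ^ 2 / (8 + κ)) := by
    rw [show 1 - 16 / (4 + κ) ^ 2 = κ * (8 + κ) / (4 + κ) ^ 2 by field_simp; ring]
    field_simp
  have hq : Real.log ((4 + κ) ^ 2 / (8 + κ)) ≤ π := calc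
    _ ≤ (4 + κ) ^ 2 / (8 + κ) - 1 := Real.log_le_sub_one_of_pos (by positivity)
    _ ≤ 3 := by rw [sub_le_iff_le_add, div_le_iff₀ (by linarith)]; nlinarith
    _ ≤ π := Real.pi_gt_three.le
  rw [← Real.log_inv, hfactor, Real.log_mul (by positivity) (by positivity)]
  linarith

/-- Lemma 3.4, eq. (3.12): `G^{o,o} ≤ (log κ⁻¹)/π + 2` for `0 < κ < 1`. -/
theorem stmt8 (κ : ℝ) (hκ : 0 < κ) (hκ' : κ < 1) :
    G κ (0, 0) ≤ Real.log κ⁻¹ / π + 2 := calc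
  G κ (0, 0) ≤ 1 + -Real.log (1 - 16 / (4 + κ) ^ 2) / π := G_origin_le hκ
  _ ≤ 1 + (Real.log κ⁻¹ + π) / π := by gcongr; exact neg_log_one_sub_le hκ hκ'
  _ = Real.log κ⁻¹ / π + 2 := by field_simp; ring
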